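/- The poset P₂ = (X × ℕ × ℕ) ∪ B ∪ {⊤₂} described in the context is a dcpo; moreover, every directed subset of P₂ without a greatest element is of the form {(f₀, n, k₀) : n ∈ N} for fixed f₀ ∈ X, k₀ ∈ ℕ and an infinite N ⊆ ℕ, or is a directed subset cofinally contained in B. -/

import Mathlib

/-- A subset `D` is directed with respect to the relation `le`:
it is nonempty and any two elements have an upper bound in `D`. -/
def DirectedOn' {α : Type*} (le : α → α → Prop) (D : Set α) : Prop :=
  D.Nonempty ∧ ∀ x ∈ D, ∀ y ∈ D, ∃ z ∈ D, le x z ∧ le y z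

/-- `u` is a least upper bound of `D` with respect to the relation `le`. -/
def IsLub' {α : Type*} (le : α → α → Prop) (D : Set α) (u : α) : Prop :=
  (∀ x ∈ D, le x u) ∧ ∀ v, (∀ x ∈ D, le x v) → le u v

/-- Every directed subset has a least upper bound: `le` makes the carrier a dcpo. -/
def IsDcpoRel {α : Type*} (le : α → α → Prop) : Prop :=
  ∀ D : Set α, DirectedOn' le D → ∃ u, IsLub' le D u

/-- `U` is Scott open with respect to `le`: it is an upper set and every directed subset
whose least upper bound lies in `U` meets `U`. -/
def ScottOpen' {α : Type*} (le : α → α → Prop) (U : Set α) : Prop :=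
  (∀ x y, le x y → x ∈ U → y ∈ U) ∧
    ∀ D u, DirectedOn' le D → IsLub' le D u → u ∈ U → (D ∩ U).Nonempty

/-- `A` is Scott closed with respect to `le`: it is a lower set and contains the least upper
bounds of its directed subsets. -/
def ScottClosed' {α : Type*} (le : α → α → Prop) (A : Set α) : Prop :=
  (∀ x y, le x y → y ∈ A → x ∈ A) ∧
    ∀ D u, D ⊆ A → DirectedOn' le D → IsLub' le D u → u ∈ A

/-- Sobriety of the Scott space of `le`: the space is T₀ and every irreducible Scott closed
subset is the Scott closure `↓x = {y | le y x}` of a unique point `x`. -/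
def SoberRel {α : Type*} (le : α → α → Prop) : Prop :=
  (∀ x y : α, (∀ U : Set α, ScottOpen' le U → (x ∈ U ↔ y ∈ U)) → x = y) ∧
    ∀ C : Set α, ScottClosed' le C → C.Nonempty →
      (∀ A B : Set α, ScottClosed' le A → ScottClosed' le B → C ⊆ A ∪ B → C ⊆ A ∨ C ⊆ B) →
      ∃! x : α, C = {y | le y x}

/-! ### The posets `M`, `L`, `B`, `P₁`, `P₂` of Miao, Xi, Jia, Li, Zhao -/

/-- `ℕ^{<ℕ}`: nonempty finite words over `ℕ`. -/
abbrev NWord : Type := {l : List ℕ // l ≠ []}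

/-- The prefix order on nonempty finite words. -/
def wordLE (v w : NWord) : Prop := v.1 <+: w.1

/-- The word of length 1 corresponding to a natural number. -/
def word1 (k : ℕ) : NWord := ⟨[k], by simp⟩

/-- `s.k`: the word `s` extended by the letter `k`. -/
def wordSnoc (s : NWord) (k : ℕ) : NWord := ⟨s.1 ++ [k], by simp⟩

/-- The poset `M = ℕ ⊔ ℕ^{<ℕ}`, the disjoint sum of `ℕ` and the words. -/
abbrev Mt : Type := ℕ ⊕ NWord

/-- The (disjoint sum) order on `M`. -/
def Mle : Mt → Mt → Prop
  | Sum.inl a, Sum.inl b => a ≤ b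
  | Sum.inr v, Sum.inr w => wordLE v w
  | _, _ => False

/-- The strict order on `M`. -/
def Mlt (x y : Mt) : Prop := Mle x y ∧ x ≠ y

/-- Pairs `(a, b)` of naturals with `a < b`. -/
abbrev Pairt : Type := {p : ℕ × ℕ // p.1 < p.2}

/-- The poset `L = ({(a,b) : a < b} × M) ∪ {⊤}`; `none` is the top element `⊤` and
`some (p, x)` is the element `x_{a,b}` for `p = (a,b)`. -/
abbrev Lt : Type := Option (Pairt × Mt)

/-- The strict order on `L`: everything (other than `⊤`) is strictly below `⊤ = none`, and
`x_{a,b} < y_{a,b}` iff `x < y` in `M` (with the same tag `(a,b)`). -/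
def Llt (u v : Lt) : Prop :=
  (u ≠ none ∧ v = none) ∨ ∃ p x y, u = some (p, x) ∧ v = some (p, y) ∧ Mlt x y

/-- The carrier of the poset `B = ℕ × ℕ × L`. -/
abbrev Bt : Type := ℕ × ℕ × Lt

/-- `⊏₁`: `(m, n, ℓ) ⊏₁ (m, n, ℓ')` whenever `ℓ < ℓ'` in `L`. -/
def sq1 : Bt → Bt → Prop := fun x y =>
  ∃ m n u v, x = (m, n, u) ∧ y = (m, n, v) ∧ Llt u v

/-- `⊏₂`: `(a, n, x_{a,b}) ⊏₂ (f_{a,b}(x), n+1, ⊤)` for a word `x ∈ ℕ^{<ℕ}`. -/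
def sq2 (f : Pairt → NWord → ℕ) : Bt → Bt → Prop := fun x y =>
  ∃ (n : ℕ) (p : Pairt) (w : NWord),
    x = (p.1.1, n, some (p, Sum.inr w)) ∧ y = (f p w, n + 1, (none : Lt))

/-- `⊏₃`: `(b, n, x_{a,b}) ⊏₃ (f_{a,b}(x), n+1, ⊤)` for `x ∈ ℕ`, regarded as a word of
length 1. -/
def sq3 (f : Pairt → NWord → ℕ) : Bt → Bt → Prop := fun x y =>
  ∃ (n k : ℕ) (p : Pairt),
    x = (p.1.2, n, some (p, Sum.inl k)) ∧ y = (f p (word1 k), n + 1, (none : Lt))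

/-- `⊏₄`: `(f_{a,b}(s), n, x_{a,b}) ⊏₄ (f_{a,b}(s.x), n, ⊤)` for a word `s` and `x ∈ ℕ`. -/
def sq4 (f : Pairt → NWord → ℕ) : Bt → Bt → Prop := fun x y =>
  ∃ (n k : ℕ) (p : Pairt) (s : NWord),
    x = (f p s, n, some (p, Sum.inl k)) ∧ y = (f p (wordSnoc s k), n, (none : Lt))

/-- `⊏ = ⊏₁ ∪ ⊏₂ ∪ ⊏₃ ∪ ⊏₄ ∪ ⊏₁;⊏₂ ∪ ⊏₁;⊏₃ ∪ ⊏₁;⊏₄`. -/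
def Bsq (f : Pairt → NWord → ℕ) : Bt → Bt → Prop := fun x y =>
  sq1 x y ∨ sq2 f x y ∨ sq3 f x y ∨ sq4 f x y ∨
    (∃ z, sq1 x z ∧ sq2 f z y) ∨ (∃ z, sq1 x z ∧ sq3 f z y) ∨ (∃ z, sq1 x z ∧ sq4 f z y)

/-- The order `⊑` on `B`: the reflexive closure of `⊏`. -/
def Ble (f : Pairt → NWord → ℕ) (x y : Bt) : Prop := x = y ∨ Bsq f x y

/-- The hypotheses on the data `i`, `f`: `i` is an injection into `P(ℕ)` with pairwise
disjoint values satisfying `n < k` for all `k ∈ i (m, n)`, and each `f_{a,b}` is a monotone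
injection of `ℕ^{<ℕ}` (with the prefix order) into `i (a, b)`. -/
structure IFData (i : Pairt → Set ℕ) (f : Pairt → NWord → ℕ) : Prop where
  inj : Function.Injective i
  disj : ∀ p q : Pairt, p ≠ q → i p ∩ i q = ∅
  gt : ∀ p : Pairt, ∀ k ∈ i p, p.1.2 < k
  mem : ∀ p w, f p w ∈ i p
  finj : ∀ p, Function.Injective (f p)
  fmono : ∀ p v w, wordLE v w → f p v ≤ f p w

/-- `X = {g : ℕ → ⋃ₙ Eₙ : g(n) ∈ Eₙ}` where `Eₙ = i(φ(n))`. -/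
def Xt (i : Pairt → Set ℕ) (φ : ℕ → Pairt) : Type := {g : ℕ → ℕ // ∀ n, g n ∈ i (φ n)}

/-- The carrier of the poset `P₂ = (X × ℕ × ℕ) ∪ B ∪ {⊤₂}`. -/
abbrev P2t (i : Pairt → Set ℕ) (φ : ℕ → Pairt) : Type := (Xt i φ × ℕ × ℕ) ⊕ Bt ⊕ Unit

/-- The top element `⊤₂` of `P₂`. -/
def P2top (i : Pairt → Set ℕ) (φ : ℕ → Pairt) : P2t i φ := Sum.inr (Sum.inr ())

/-- The inclusion of `B` into `P₂`. -/
def P2ofB (i : Pairt → Set ℕ) (φ : ℕ → Pairt) (b : Bt) : P2t i φ := Sum.inr (Sum.inl b)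

/-- The strict order `<₁ ∪ <₂ ∪ <₃ ∪ <₄ ∪ <₁;<₃` of `P₂`:
`(g, n, k) <₁ (g, m, k)` iff `n < m`; `<₂` is `⊏` on `B`; `(g, n, k) <₃ (g(n), k, ⊤)`;
`x <₄ ⊤₂` for `x ≠ ⊤₂`; and `(g, n, k) <₁;<₃ (g(m), k, ⊤)` for `n < m`. -/
def P2lt (i : Pairt → Set ℕ) (φ : ℕ → Pairt) (f : Pairt → NWord → ℕ) :
    P2t i φ → P2t i φ → Prop := fun x y =>
  (∃ (g : Xt i φ) (n m k : ℕ), x = Sum.inl (g, n, k) ∧ y = Sum.inl (g, m, k) ∧ n < m) ∨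
  (∃ b c : Bt, x = P2ofB i φ b ∧ y = P2ofB i φ c ∧ Bsq f b c) ∨
  (∃ (g : Xt i φ) (n k : ℕ), x = Sum.inl (g, n, k) ∧ y = P2ofB i φ (g.1 n, k, (none : Lt))) ∨
  (x ≠ P2top i φ ∧ y = P2top i φ) ∨
  (∃ (g : Xt i φ) (n m k : ℕ), x = Sum.inl (g, n, k) ∧ n < m ∧
    y = P2ofB i φ (g.1 m, k, (none : Lt)))

/-- The order of `P₂`: the reflexive closure of the strict order. -/
def P2le (i : Pairt → Set ℕ) (φ : ℕ → Pairt) (f : Pairt → NWord → ℕ) (x y : P2t i φ) : Prop :=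
  x = y ∨ P2lt i φ f x y


def Msize : Mt → ℕ
  | Sum.inl a => a
  | Sum.inr w => w.1.length

lemma Mlt_size {x y : Mt} (h : Mlt x y) : Msize x < Msize y := by
  obtain ⟨h1, h2⟩ := h
  cases x with
  | inl a => cases y with
    | inl b =>
      simp only [Mle] at h1
      have : a ≠ b := fun hh => h2 (by rw [hh])
      simp [Msize]; omega
    | inr w => simp [Mle] at h1
  | inr v => cases y with
    | inl b => simp [Mle] at h1
    | inr w =>
      simp only [Mle, wordLE] at h1
      have hle := h1.length_le
      rcases Nat.lt_or_ge v.1.length w.1.length with h | h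
      · simpa [Msize] using h
      · exfalso; apply h2
        have := h1.eq_of_length_le h
        exact congrArg Sum.inr (Subtype.ext this)

lemma Mle_trans {x y z : Mt} (h1 : Mle x y) (h2 : Mle y z) : Mle x z := by
  cases x <;> cases y <;> cases z <;> simp_all [Mle, wordLE]
  · omega
  · exact h1.trans h2

lemma Mlt_trans {x y z : Mt} (h1 : Mlt x y) (h2 : Mlt y z) : Mlt x z := by
  refine ⟨Mle_trans h1.1 h2.1, fun h => ?_⟩
  have := (Mlt_size h1).trans (Mlt_size h2)
  rw [h] at this; omega

lemma Llt_none {v : Lt} (h : Llt none v) : False := by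
  rcases h with ⟨h, _⟩ | ⟨p, x, y, h, _⟩ <;> simp at h

lemma Llt_trans {u v w : Lt} (h1 : Llt u v) (h2 : Llt v w) : Llt u w := by
  rcases h1 with ⟨hu, hv⟩ | ⟨p, x, y, hu, hv, hxy⟩
  · subst hv; exact absurd h2 Llt_none
  · subst hu hv
    rcases h2 with ⟨_, hw⟩ | ⟨q, x', y', hv', hw, hyz⟩
    · exact Or.inl ⟨by simp, hw⟩
    · obtain ⟨hq, hx'⟩ := by simpa using hv'
      subst hq hx'
      exact Or.inr ⟨p, x, y', rfl, hw, Mlt_trans hxy hyz⟩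


section Blemmas
variable {f : Pairt → NWord → ℕ}

/-- the source of any `sq` relation has a `some` L-component -/
lemma sq2_src {x y : Bt} (h : sq2 f x y) : ∃ p e, x.2.2 = some (p, e) := by
  obtain ⟨n, p, w, hx, -⟩ := h; exact ⟨p, Sum.inr w, by rw [hx]⟩
lemma sq3_src {x y : Bt} (h : sq3 f x y) : ∃ p e, x.2.2 = some (p, e) := by
  obtain ⟨n, k, p, hx, -⟩ := h; exact ⟨p, Sum.inl k, by rw [hx]⟩
lemma sq4_src {x y : Bt} (h : sq4 f x y) : ∃ p e, x.2.2 = some (p, e) := by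
  obtain ⟨n, k, p, s, hx, -⟩ := h; exact ⟨p, Sum.inl k, by rw [hx]⟩
lemma sq1_src {x y : Bt} (h : sq1 x y) : ∃ p e, x.2.2 = some (p, e) := by
  obtain ⟨m, n, u, v, hx, hy, huv⟩ := h
  rcases huv with ⟨hu, -⟩ | ⟨p, a, b, hu, -⟩
  · subst hx; rcases u with _ | ⟨pe⟩
    · simp at hu
    · exact ⟨pe.1, pe.2, by simp⟩
  · subst hx hu; exact ⟨p, a, rfl⟩
lemma sq2_tgt {x y : Bt} (h : sq2 f x y) : y.2.2 = none := by
  obtain ⟨n, p, w, -, hy⟩ := h; rw [hy]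
lemma sq3_tgt {x y : Bt} (h : sq3 f x y) : y.2.2 = none := by
  obtain ⟨n, k, p, -, hy⟩ := h; rw [hy]
lemma sq4_tgt {x y : Bt} (h : sq4 f x y) : y.2.2 = none := by
  obtain ⟨n, k, p, s, -, hy⟩ := h; rw [hy]

lemma Bsq_src {x y : Bt} (h : Bsq f x y) : ∃ p e, x.2.2 = some (p, e) := by
  rcases h with h | h | h | h | ⟨z, h, -⟩ | ⟨z, h, -⟩ | ⟨z, h, -⟩
  exacts [sq1_src h, sq2_src h, sq3_src h, sq4_src h, sq1_src h, sq1_src h, sq1_src h]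

lemma Bsq_none {m n : ℕ} {y : Bt} (h : Bsq f (m, n, (none : Lt)) y) : False := by
  obtain ⟨p, e, hh⟩ := Bsq_src h; simp at hh

/-- Any `Bsq` into an element with `some` L-component is `sq1`. -/
lemma Bsq_to_some {x : Bt} {m n : ℕ} {pe : Pairt × Mt}
    (h : Bsq f x (m, n, some pe)) : sq1 x (m, n, some pe) := by
  rcases h with h | h | h | h | ⟨z, h1, h2⟩ | ⟨z, h1, h2⟩ | ⟨z, h1, h2⟩
  · exact h
  · have := sq2_tgt h; simp at this
  · have := sq3_tgt h; simp at this
  · have := sq4_tgt h; simp at this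
  · have := sq2_tgt h2; simp at this
  · have := sq3_tgt h2; simp at this
  · have := sq4_tgt h2; simp at this

lemma sq1_trans {x y z : Bt} (h1 : sq1 x y) (h2 : sq1 y z) : sq1 x z := by
  obtain ⟨m, n, u, v, hx, hy, huv⟩ := h1
  obtain ⟨m', n', u', v', hy', hz, huv'⟩ := h2
  rw [hy] at hy'
  obtain ⟨h1, h2, h3⟩ : m = m' ∧ n = n' ∧ v = u' := by simpa [Prod.ext_iff] using hy'
  subst h1 h2 h3
  exact ⟨m, n, u, v', hx, hz, Llt_trans huv huv'⟩

lemma Bsq_trans {x y z : Bt} (h1 : Bsq f x y) (h2 : Bsq f y z) : Bsq f x z := by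
  -- y must have a some L-component (from h2's source); so h1 is sq1-like into some
  obtain ⟨p, e, hy⟩ := Bsq_src h2
  obtain ⟨m, n, u⟩ := y
  simp only at hy; subst hy
  have h1' : sq1 x (m, n, some (p, e)) := Bsq_to_some h1
  rcases h2 with h | h | h | h | ⟨w, hw1, hw2⟩ | ⟨w, hw1, hw2⟩ | ⟨w, hw1, hw2⟩
  · exact Or.inl (sq1_trans h1' h)
  · exact Or.inr <| Or.inr <| Or.inr <| Or.inr <| Or.inl ⟨_, h1', h⟩
  · exact Or.inr <| Or.inr <| Or.inr <| Or.inr <| Or.inr <| Or.inl ⟨_, h1', h⟩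
  · exact Or.inr <| Or.inr <| Or.inr <| Or.inr <| Or.inr <| Or.inr ⟨_, h1', h⟩
  · exact Or.inr <| Or.inr <| Or.inr <| Or.inr <| Or.inl ⟨w, sq1_trans h1' hw1, hw2⟩
  · exact Or.inr <| Or.inr <| Or.inr <| Or.inr <| Or.inr <| Or.inl ⟨w, sq1_trans h1' hw1, hw2⟩
  · exact Or.inr <| Or.inr <| Or.inr <| Or.inr <| Or.inr <| Or.inr ⟨w, sq1_trans h1' hw1, hw2⟩

/-- decomposition of `sq1` from an element with `some` component -/
lemma sq1_some {m n : ℕ} {p : Pairt} {x : Mt} {y : Bt}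
    (h : sq1 (m, n, some (p, x)) y) :
    y = (m, n, (none : Lt)) ∨ ∃ x', y = (m, n, some (p, x')) ∧ Mlt x x' := by
  obtain ⟨m', n', u, v, hx, hy, huv⟩ := h
  obtain ⟨h1, h2, h3⟩ : m' = m ∧ n' = n ∧ u = some (p, x) := by simpa [Prod.ext_iff] using hx.symm
  subst h1 h2 h3; subst hy
  rcases huv with ⟨-, hv⟩ | ⟨q, a, b, hu, hv, hab⟩
  · subst hv; exact Or.inl rfl
  · 
    obtain ⟨hq, ha⟩ := by simpa using hu
    subst hq ha hv
    exact Or.inr ⟨b, rfl, hab⟩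

lemma Bsq_irrefl {x : Bt} (h : Bsq f x x) : False := by
  obtain ⟨p, e, hx⟩ := Bsq_src h
  obtain ⟨m, n, u⟩ := x
  simp only at hx; subst hx
  have h1 := Bsq_to_some h
  rcases sq1_some h1 with h' | ⟨x', h', hlt⟩
  · simp at h'
  · obtain hh := by simpa using h'
    have := Mlt_size hlt
    rw [hh] at this; omega


section Bound
variable {i : Pairt → Set ℕ} {f : Pairt → NWord → ℕ}

lemma word1_inj {k k' : ℕ} (h : word1 k = word1 k') : k = k' := by
  simpa [word1, Subtype.ext_iff] using h

lemma wordSnoc_inj {s s' : NWord} {k k' : ℕ} (h : wordSnoc s k = wordSnoc s' k') :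
    s = s' ∧ k = k' := by
  have h' : s.1 ++ [k] = s'.1 ++ [k'] := by simpa [wordSnoc, Subtype.ext_iff] using h
  obtain ⟨h1, h2⟩ := List.append_inj' h' rfl
  exact ⟨Subtype.ext h1, by simpa using h2⟩

/-- the key size-bound lemma for upper bounds in `B` -/
lemma Bsq_bound (hif : IFData i f) {m n : ℕ} {p : Pairt} {v : Bt}
    (hv : v ≠ (m, n, (none : Lt))) :
    ∃ C, ∀ x : Mt, Bsq f (m, n, some (p, x)) v → Msize x ≤ C := by
  classical
  obtain ⟨c, n', ℓ⟩ := v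
  set C1 : ℕ := ℓ.elim 0 (fun q => Msize q.2) with hC1
  set C2 : ℕ := if h : ∃ w : NWord, c = f p w then h.choose.1.length else 0 with hC2
  set C3 : ℕ := if h : ∃ k : ℕ, c = f p (word1 k) then h.choose else 0 with hC3
  set C4 : ℕ := if h : ∃ sk : NWord × ℕ, c = f p (wordSnoc sk.1 sk.2) then h.choose.2 else 0
    with hC4
  refine ⟨max (max C1 C2) (max C3 C4), ?_⟩
  have d2 : ∀ x : Mt, sq2 f (m, n, some (p, x)) (c, n', ℓ) → Msize x ≤ C2 := by
    rintro x ⟨n₁, p₁, w, hx, hy⟩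
    obtain ⟨-, -, hp, hw⟩ : m = p₁.1.1 ∧ n = n₁ ∧ p = p₁ ∧ x = Sum.inr w := by
      simpa [Prod.ext_iff] using hx
    subst hp hw
    obtain ⟨hc, -⟩ : c = f p w ∧ _ := by simpa [Prod.ext_iff] using hy
    have h : ∃ w' : NWord, c = f p w' := ⟨w, hc⟩
    have : w = h.choose := hif.finj p (hc.symm.trans h.choose_spec)
    rw [hC2, dif_pos h]
    simp [Msize, this]
  have d3 : ∀ x : Mt, sq3 f (m, n, some (p, x)) (c, n', ℓ) → Msize x ≤ C3 := by
    rintro x ⟨n₁, k, p₁, hx, hy⟩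
    obtain ⟨-, -, hp, hk⟩ : m = p₁.1.2 ∧ n = n₁ ∧ p = p₁ ∧ x = Sum.inl k := by
      simpa [Prod.ext_iff] using hx
    subst hp hk
    obtain ⟨hc, -⟩ : c = f p (word1 k) ∧ _ := by simpa [Prod.ext_iff] using hy
    have h : ∃ k' : ℕ, c = f p (word1 k') := ⟨k, hc⟩
    have : k = h.choose := word1_inj (hif.finj p (hc.symm.trans h.choose_spec))
    rw [hC3, dif_pos h]
    simp [Msize, this]
  have d4 : ∀ x : Mt, sq4 f (m, n, some (p, x)) (c, n', ℓ) → Msize x ≤ C4 := by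
    rintro x ⟨n₁, k, p₁, s, hx, hy⟩
    obtain ⟨-, -, hp, hk⟩ : m = f p₁ s ∧ n = n₁ ∧ p = p₁ ∧ x = Sum.inl k := by
      simpa [Prod.ext_iff] using hx
    subst hp hk
    obtain ⟨hc, -⟩ : c = f p (wordSnoc s k) ∧ _ := by simpa [Prod.ext_iff] using hy
    have h : ∃ sk : NWord × ℕ, c = f p (wordSnoc sk.1 sk.2) := ⟨(s, k), hc⟩
    have : k = h.choose.2 :=
      (wordSnoc_inj (hif.finj p (hc.symm.trans h.choose_spec))).2
    rw [hC4, dif_pos h]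
    simp [Msize, this]
  intro x hx
  have hcomp : ∀ z : Bt, sq1 (m, n, some (p, x)) z →
      (sq2 f z (c, n', ℓ) ∨ sq3 f z (c, n', ℓ) ∨ sq4 f z (c, n', ℓ)) →
      Msize x ≤ max (max C1 C2) (max C3 C4) := by
    intro z h1 h2
    rcases sq1_some h1 with hz | ⟨x', hz, hlt⟩
    · subst hz
      exfalso
      rcases h2 with h | h | h
      · obtain ⟨_, _, hh⟩ := sq2_src h; simp at hh
      · obtain ⟨_, _, hh⟩ := sq3_src h; simp at hh
      · obtain ⟨_, _, hh⟩ := sq4_src h; simp at hh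
    · subst hz
      have hs := Mlt_size hlt
      rcases h2 with h | h | h
      · have := d2 x' h; omega
      · have := d3 x' h; omega
      · have := d4 x' h; omega
  rcases hx with h | h | h | h | ⟨z, h1, h2⟩ | ⟨z, h1, h2⟩ | ⟨z, h1, h2⟩
  · rcases sq1_some h with hz | ⟨x', hz, hlt⟩
    · exact absurd hz hv
    · obtain ⟨-, -, hℓ⟩ : c = m ∧ n' = n ∧ ℓ = some (p, x') := by
        simpa [Prod.ext_iff] using hz
      have hs := Mlt_size hlt
      have : Msize x' ≤ C1 := by rw [hC1, hℓ]; simp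
      omega
  · have := d2 x h; omega
  · have := d3 x h; omega
  · have := d4 x h; omega
  · exact hcomp z h1 (Or.inl h2)
  · exact hcomp z h1 (Or.inr (Or.inl h2))
  · exact hcomp z h1 (Or.inr (Or.inr h2))

end Bound
end Blemmas
section P2lemmas
variable {i : Pairt → Set ℕ} {φ : ℕ → Pairt} {f : Pairt → NWord → ℕ}

lemma P2le_refl (x : P2t i φ) : P2le i φ f x x := Or.inl rfl

lemma P2top_ne_ofB (b : Bt) : P2ofB i φ b ≠ P2top i φ := by simp [P2ofB, P2top]

lemma P2le_top (x : P2t i φ) : P2le i φ f x (P2top i φ) := by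
  by_cases h : x = P2top i φ
  · exact Or.inl h
  · exact Or.inr (Or.inr (Or.inr (Or.inr (Or.inl ⟨h, rfl⟩))))

lemma P2lt_top (y : P2t i φ) (h : P2lt i φ f (P2top i φ) y) : False := by
  rcases h with ⟨g, n, m, k, hx, -⟩ | ⟨b, c, hx, -⟩ | ⟨g, n, k, hx, -⟩ | ⟨hx, -⟩ |
    ⟨g, n, m, k, hx, -⟩
  · simp [P2top] at hx
  · simp [P2top, P2ofB] at hx
  · simp [P2top] at hx
  · exact hx rfl
  · simp [P2top] at hx

lemma P2le_top_eq {y : P2t i φ} (h : P2le i φ f (P2top i φ) y) : y = P2top i φ := by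
  rcases h with h | h
  · exact h.symm
  · exact absurd h (P2lt_top y)

/-- what lies above a `B`-element -/
lemma P2lt_ofB {b : Bt} {y : P2t i φ} (h : P2lt i φ f (P2ofB i φ b) y) :
    (∃ c : Bt, y = P2ofB i φ c ∧ Bsq f b c) ∨ y = P2top i φ := by
  rcases h with ⟨g, n, m, k, hx, -⟩ | ⟨b', c, hx, hy, hbc⟩ | ⟨g, n, k, hx, -⟩ | ⟨-, hy⟩ |
    ⟨g, n, m, k, hx, -⟩
  · simp [P2ofB] at hx
  · have : b = b' := by simpa [P2ofB] using hx
    exact Or.inl ⟨c, hy, this ▸ hbc⟩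
  · simp [P2ofB] at hx
  · exact Or.inr hy
  · simp [P2ofB] at hx

lemma P2le_ofB {b : Bt} {y : P2t i φ} (h : P2le i φ f (P2ofB i φ b) y) :
    (∃ c : Bt, y = P2ofB i φ c ∧ Ble f b c) ∨ y = P2top i φ := by
  rcases h with h | h
  · exact Or.inl ⟨b, h.symm, Or.inl rfl⟩
  · rcases P2lt_ofB h with ⟨c, hy, hbc⟩ | hy
    · exact Or.inl ⟨c, hy, Or.inr hbc⟩
    · exact Or.inr hy

/-- what lies above an `inl`-element within `inl` -/
lemma P2le_inl {g : Xt i φ} {n k : ℕ} {t : Xt i φ × ℕ × ℕ}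
    (h : P2le i φ f (Sum.inl (g, n, k)) (Sum.inl t)) :
    ∃ m, t = (g, m, k) ∧ n ≤ m := by
  rcases h with h | h
  · exact ⟨n, (by simpa using h.symm), le_refl n⟩
  · rcases h with ⟨g', n', m, k', hx, hy, hnm⟩ | ⟨b, c, hx, -⟩ | ⟨g', n', k', hx, hy⟩ |
      ⟨-, hy⟩ | ⟨g', n', m, k', hx, -, hy⟩
    · obtain ⟨hg, hn, hk⟩ : g = g' ∧ n = n' ∧ k = k' := by
        simpa [Prod.ext_iff] using hx
      subst hg hn hk
      exact ⟨m, by simpa using hy, le_of_lt hnm⟩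
    · simp [P2ofB] at hx
    · simp [P2ofB] at hy
    · simp [P2top] at hy
    · simp [P2ofB] at hy

/-- what lies above an `inl`-element in `B` -/
lemma P2lt_inl_ofB {g : Xt i φ} {n k : ℕ} {c : Bt}
    (h : P2lt i φ f (Sum.inl (g, n, k)) (P2ofB i φ c)) :
    ∃ m, n ≤ m ∧ c = (g.1 m, k, (none : Lt)) := by
  rcases h with ⟨g', n', m, k', hx, hy, -⟩ | ⟨b, c', hx, -⟩ | ⟨g', n', k', hx, hy⟩ |
    ⟨-, hy⟩ | ⟨g', n', m, k', hx, hnm, hy⟩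
  · simp [P2ofB] at hy
  · simp [P2ofB] at hx
  · obtain ⟨hg, hn, hk⟩ : g = g' ∧ n = n' ∧ k = k' := by simpa [Prod.ext_iff] using hx
    subst hg hn hk
    exact ⟨n, le_refl n, by simpa [P2ofB] using hy⟩
  · simp [P2ofB, P2top] at hy
  · obtain ⟨hg, hn, hk⟩ : g = g' ∧ n = n' ∧ k = k' := by simpa [Prod.ext_iff] using hx
    subst hg hn hk
    exact ⟨m, le_of_lt hnm, by simpa [P2ofB] using hy⟩

lemma P2lt_irrefl (x : P2t i φ) (h : P2lt i φ f x x) : False := by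
  rcases h with ⟨g, n, m, k, hx, hy, hnm⟩ | ⟨b, c, hx, hy, hbc⟩ | ⟨g, n, k, hx, hy⟩ |
    ⟨hx, hy⟩ | ⟨g, n, m, k, hx, -, hy⟩
  · rw [hx] at hy
    obtain ⟨-, hn, -⟩ : g = g ∧ n = m ∧ k = k := by simpa [Prod.ext_iff] using hy
    omega
  · rw [hx] at hy
    have : b = c := by simpa [P2ofB] using hy
    exact Bsq_irrefl (this ▸ hbc)
  · rw [hx] at hy; simp [P2ofB] at hy
  · exact hx hy
  · rw [hx] at hy; simp [P2ofB] at hy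

lemma P2inl_ne_top (t : Xt i φ × ℕ × ℕ) : (Sum.inl t : P2t i φ) ≠ P2top i φ := by
  simp [P2top]

lemma P2lt_trans {x y z : P2t i φ} (h1 : P2lt i φ f x y) (h2 : P2lt i φ f y z) :
    P2lt i φ f x z := by
  rcases h1 with ⟨g, n, m, k, hx, hy, hnm⟩ | ⟨b, c, hx, hy, hbc⟩ | ⟨g, n, k, hx, hy⟩ |
    ⟨hx, hy⟩ | ⟨g, n, m, k, hx, hnm, hy⟩
  · -- case <₁
    subst hy
    rcases h2 with ⟨g', n', m', k', hy', hz, h'⟩ | ⟨b, c, hy', -⟩ | ⟨g', n', k', hy', hz⟩ |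
      ⟨-, hz⟩ | ⟨g', n', m', k', hy', h', hz⟩
    · obtain ⟨hg, hn, hk⟩ : g = g' ∧ m = n' ∧ k = k' := by simpa [Prod.ext_iff] using hy'
      subst hg hn hk
      exact Or.inl ⟨g, n, m', k, hx, hz, by omega⟩
    · simp [P2ofB] at hy'
    · obtain ⟨hg, hn, hk⟩ : g = g' ∧ m = n' ∧ k = k' := by simpa [Prod.ext_iff] using hy'
      subst hg hn hk
      exact Or.inr <| Or.inr <| Or.inr <| Or.inr ⟨g, n, m, k, hx, hnm, hz⟩
    · exact Or.inr <| Or.inr <| Or.inr <| Or.inl ⟨by rw [hx]; exact P2inl_ne_top _, hz⟩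
    · obtain ⟨hg, hn, hk⟩ : g = g' ∧ m = n' ∧ k = k' := by simpa [Prod.ext_iff] using hy'
      subst hg hn hk
      exact Or.inr <| Or.inr <| Or.inr <| Or.inr ⟨g, n, m', k, hx, by omega, hz⟩
  · -- case <₂
    subst hy
    rcases P2lt_ofB h2 with ⟨c', hz, hcc⟩ | hz
    · exact Or.inr <| Or.inl ⟨b, c', hx, hz, Bsq_trans hbc hcc⟩
    · exact Or.inr <| Or.inr <| Or.inr <| Or.inl ⟨by rw [hx]; exact P2top_ne_ofB _, hz⟩
  · -- case <₃
    subst hy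
    rcases P2lt_ofB h2 with ⟨c', hz, hcc⟩ | hz
    · exact absurd hcc Bsq_none
    · exact Or.inr <| Or.inr <| Or.inr <| Or.inl ⟨by rw [hx]; exact P2inl_ne_top _, hz⟩
  · -- case <₄
    subst hy
    exact absurd h2 (P2lt_top z)
  · -- case <₁;<₃
    subst hy
    rcases P2lt_ofB h2 with ⟨c', hz, hcc⟩ | hz
    · exact absurd hcc Bsq_none
    · exact Or.inr <| Or.inr <| Or.inr <| Or.inl ⟨by rw [hx]; exact P2inl_ne_top _, hz⟩

lemma P2le_trans {x y z : P2t i φ} (h1 : P2le i φ f x y) (h2 : P2le i φ f y z) :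
    P2le i φ f x z := by
  rcases h1 with rfl | h1
  · exact h2
  rcases h2 with rfl | h2
  · exact Or.inr h1
  · exact Or.inr (P2lt_trans h1 h2)

lemma P2le_antisymm {x y : P2t i φ} (h1 : P2le i φ f x y) (h2 : P2le i φ f y x) : x = y := by
  rcases h1 with rfl | h1
  · rfl
  rcases h2 with rfl | h2
  · rfl
  · exact absurd (P2lt_trans h1 h2) (P2lt_irrefl x)

lemma P2_partialOrder : IsPartialOrder (P2t i φ) (P2le i φ f) where
  refl := P2le_refl
  trans := fun _ _ _ => P2le_trans
  antisymm := fun _ _ => P2le_antisymm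
end P2lemmas

section Main
variable {i : Pairt → Set ℕ} {φ : ℕ → Pairt} {f : Pairt → NWord → ℕ} {D : Set (P2t i φ)}

lemma top_notin (hng : ¬ ∃ m ∈ D, ∀ x ∈ D, P2le i φ f x m) : P2top i φ ∉ D := by
  intro h
  exact hng ⟨P2top i φ, h, fun x _ => P2le_top x⟩

/-- cofinality of `B` in `D` when `D` meets `B` -/
lemma cofinal_in_B (hD : DirectedOn' (P2le i φ f) D)
    (hng : ¬ ∃ m ∈ D, ∀ x ∈ D, P2le i φ f x m) {b₀ : Bt} (hb₀ : P2ofB i φ b₀ ∈ D) :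
    ∀ x ∈ D, ∃ y ∈ D, (∃ b : Bt, y = P2ofB i φ b) ∧ P2le i φ f x y := by
  intro x hx
  obtain ⟨z, hz, hxz, hbz⟩ := hD.2 x hx (P2ofB i φ b₀) hb₀
  rcases P2le_ofB hbz with ⟨c, hc, -⟩ | hc
  · exact ⟨z, hz, ⟨c, hc⟩, hxz⟩
  · exact absurd (hc ▸ hz) (top_notin hng)

/-- no element of `D ∩ B` has a `⊤` (`none`) L-component when `D` has no greatest element -/
lemma no_none_comp (hD : DirectedOn' (P2le i φ f) D)
    (hng : ¬ ∃ m ∈ D, ∀ x ∈ D, P2le i φ f x m) {m n : ℕ}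
    (h : P2ofB i φ (m, n, (none : Lt)) ∈ D) : False := by
  apply hng
  refine ⟨P2ofB i φ (m, n, (none : Lt)), h, fun x hx => ?_⟩
  obtain ⟨z, hz, hxz, hbz⟩ := hD.2 x hx _ h
  rcases P2le_ofB hbz with ⟨c, hc, hbc⟩ | hc
  · rcases hbc with rfl | hbc
    · exact hc ▸ hxz
    · exact absurd hbc Bsq_none
  · exact absurd (hc ▸ hz) (top_notin hng)

lemma some_comp (hD : DirectedOn' (P2le i φ f) D)
    (hng : ¬ ∃ m ∈ D, ∀ x ∈ D, P2le i φ f x m) {b : Bt} (hb : P2ofB i φ b ∈ D) :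
    ∃ (m n : ℕ) (p : Pairt) (x : Mt), b = (m, n, some (p, x)) := by
  obtain ⟨m, n, ℓ⟩ := b
  rcases ℓ with _ | ⟨p, x⟩
  · exact absurd hb (fun h => no_none_comp hD hng h)
  · exact ⟨m, n, p, x, rfl⟩

/-- the lub in the `B`-cofinal case -/
lemma lub_B_case (hif : IFData i f) (hD : DirectedOn' (P2le i φ f) D)
    (hng : ¬ ∃ m ∈ D, ∀ x ∈ D, P2le i φ f x m) {b₀ : Bt} (hb₀ : P2ofB i φ b₀ ∈ D) :
    ∃ u, IsLub' (P2le i φ f) D u := by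
  obtain ⟨m₀, n₀, p₀, x₀, rfl⟩ := some_comp hD hng hb₀
  -- all B-elements of D share the tag (m₀, n₀, p₀)
  have hshare : ∀ b : Bt, P2ofB i φ b ∈ D → ∃ x, b = (m₀, n₀, some (p₀, x)) := by
    intro b hb
    obtain ⟨z, hz, hbz, hb₀z⟩ := hD.2 _ hb _ hb₀
    rcases P2le_ofB hb₀z with ⟨c, rfl, hbc0⟩ | hc
    swap
    · exact absurd (hc ▸ hz) (top_notin hng)
    obtain ⟨mc, nc, pc, xc, rfl⟩ := some_comp hD hng hz
    -- c is in the cone of b₀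
    have hc0 : ∃ x', (mc, nc, some (pc, xc)) = (m₀, n₀, some (p₀, x')) := by
      rcases hbc0 with heq | hbc0
      · exact ⟨x₀, heq.symm⟩
      · rcases sq1_some (Bsq_to_some hbc0) with h' | ⟨x', h', -⟩
        · simp at h'
        · exact ⟨x', h'⟩
    obtain ⟨x', hc0⟩ := hc0
    obtain ⟨hm, hn, hp, -⟩ : m₀ = mc ∧ n₀ = nc ∧ p₀ = pc ∧ x' = xc := by
      simpa [Prod.ext_iff] using hc0.symm
    subst hm hn hp
    rcases P2le_ofB hbz with ⟨c', hcc, hbc⟩ | hcz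
    swap
    · exact absurd (hcz ▸ hz) (top_notin hng)
    have hcc' : c' = (m₀, n₀, some (p₀, xc)) := by simpa [P2ofB] using hcc.symm
    subst hcc'
    rcases hbc with rfl | hbc
    · exact ⟨xc, rfl⟩
    · obtain ⟨mb, nb, pb, xb, rfl⟩ := some_comp hD hng hb
      rcases sq1_some (Bsq_to_some hbc) with h' | ⟨x'', h', -⟩
      · simp [Prod.ext_iff] at h'
      · obtain ⟨hm, hn, hp, -⟩ : m₀ = mb ∧ n₀ = nb ∧ p₀ = pb ∧ xc = x'' := by
          simpa [Prod.ext_iff] using h'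
        subst hm hn hp
        exact ⟨xb, rfl⟩
  -- strictly increasing successor in components
  have hsucc : ∀ x : Mt, P2ofB i φ (m₀, n₀, some (p₀, x)) ∈ D →
      ∃ x', P2ofB i φ (m₀, n₀, some (p₀, x')) ∈ D ∧ Mlt x x' := by
    intro x hx
    have : ¬ ∀ y ∈ D, P2le i φ f y (P2ofB i φ (m₀, n₀, some (p₀, x))) := by
      intro h; exact hng ⟨_, hx, h⟩
    push_neg at this
    obtain ⟨e, he, hne⟩ := this
    obtain ⟨z, hz, hez, hbz⟩ := hD.2 e he _ hx
    rcases P2le_ofB hbz with ⟨c, rfl, hbc⟩ | hc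
    swap
    · exact absurd (hc ▸ hz) (top_notin hng)
    rcases hbc with rfl | hbc
    · exact absurd hez hne
    obtain ⟨xc, rfl⟩ := hshare c hz
    rcases sq1_some (Bsq_to_some hbc) with h' | ⟨x', h', hlt⟩
    · simp [Prod.ext_iff] at h'
    · have hx' : xc = x' := by
        obtain ⟨-, -, hh⟩ : m₀ = m₀ ∧ n₀ = n₀ ∧ xc = x' := by
          simpa [Prod.ext_iff] using h'
        exact hh
      exact ⟨xc, hz, hx' ▸ hlt⟩
  -- the candidate lub
  refine ⟨P2ofB i φ (m₀, n₀, (none : Lt)), ?_, ?_⟩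
  · -- upper bound
    intro x hx
    obtain ⟨y, hy, ⟨b, rfl⟩, hxy⟩ := cofinal_in_B hD hng hb₀ x hx
    obtain ⟨x₁, rfl⟩ := hshare b hy
    refine P2le_trans hxy (Or.inr (Or.inr (Or.inl ⟨_, _, rfl, rfl, ?_⟩)))
    exact Or.inl ⟨_, _, _, _, rfl, rfl, Or.inl ⟨by simp, rfl⟩⟩
  · -- least
    intro v hv
    rcases v with t | c | u
    · -- v in X × ℕ × ℕ : impossible
      exfalso
      rcases P2le_ofB (hv _ hb₀) with ⟨c, hc, -⟩ | hc
      · simp [P2ofB] at hc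
      · simp [P2ofB, P2top] at hc
    · -- v in B
      have hc : c = (m₀, n₀, (none : Lt)) := by
        by_contra hc
        have hvD : (P2ofB i φ c : P2t i φ) ∉ D := by
          intro hmem
          exact hng ⟨_, hmem, hv⟩
        have hBsq : ∀ x : Mt, P2ofB i φ (m₀, n₀, some (p₀, x)) ∈ D →
            Bsq f (m₀, n₀, some (p₀, x)) c := by
          intro x hx
          rcases hv _ hx with heq | hlt
          · refine absurd ?_ hvD
            show Sum.inr (Sum.inl c) ∈ D
            rw [← heq]; exact hx
          · rcases P2lt_ofB hlt with ⟨c', hcc, hbc⟩ | hcc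
            · have : c' = c := by simpa [P2ofB] using hcc.symm
              exact this ▸ hbc
            · simp [P2ofB, P2top] at hcc
        obtain ⟨C, hC⟩ := Bsq_bound (p := p₀) hif hc
        have grow : ∀ j : ℕ, ∃ x : Mt,
            P2ofB i φ (m₀, n₀, some (p₀, x)) ∈ D ∧ j ≤ Msize x := by
          intro j
          induction j with
          | zero => exact ⟨x₀, hb₀, Nat.zero_le _⟩
          | succ j ih =>
            obtain ⟨x, hx, hj⟩ := ih
            obtain ⟨x', hx', hlt⟩ := hsucc x hx
            exact ⟨x', hx', by have := Mlt_size hlt; omega⟩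
        obtain ⟨x, hx, hj⟩ := grow (C + 1)
        have := hC x (hBsq x hx)
        omega
      subst hc
      exact Or.inl rfl
    · -- v = ⊤₂
      cases u
      exact P2le_top _

lemma X_inj (hif : IFData i f) (hφ : Function.Injective φ) (g : Xt i φ) :
    Function.Injective g.1 := by
  intro a b h
  by_contra hab
  have hne : φ a ≠ φ b := fun hh => hab (hφ hh)
  have h1 : g.1 a ∈ i (φ a) := g.2 a
  have h2 : g.1 a ∈ i (φ b) := h ▸ g.2 b
  have := hif.disj (φ a) (φ b) hne
  have : g.1 a ∈ i (φ a) ∩ i (φ b) := ⟨h1, h2⟩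
  simp_all

lemma classify_inl (hD : DirectedOn' (P2le i φ f) D)
    (hng : ¬ ∃ m ∈ D, ∀ x ∈ D, P2le i φ f x m)
    (hnoB : ∀ b : Bt, P2ofB i φ b ∉ D) :
    ∃ (f₀ : Xt i φ) (k₀ : ℕ) (N : Set ℕ), N.Infinite ∧
      D = {x : P2t i φ | ∃ n ∈ N, x = Sum.inl (f₀, n, k₀)} := by
  have h_inl : ∀ x ∈ D, ∃ t : Xt i φ × ℕ × ℕ, x = Sum.inl t := by
    intro x hx
    rcases x with t | b | u
    · exact ⟨t, rfl⟩
    · exact absurd hx (hnoB b)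
    · cases u; exact absurd hx (top_notin hng)
  obtain ⟨d₀, hd₀⟩ := hD.1
  obtain ⟨⟨f₀, n₀, k₀⟩, rfl⟩ := h_inl d₀ hd₀
  have hshare : ∀ x ∈ D, ∃ n, x = Sum.inl (f₀, n, k₀) := by
    intro x hx
    obtain ⟨⟨g, n, k⟩, rfl⟩ := h_inl x hx
    obtain ⟨z, hz, hxz, hdz⟩ := hD.2 _ hx _ hd₀
    obtain ⟨tz, rfl⟩ := h_inl z hz
    obtain ⟨m1, htz1, -⟩ := P2le_inl hxz
    obtain ⟨m2, htz2, -⟩ := P2le_inl hdz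
    rw [htz1] at htz2
    obtain ⟨hg, -, hk⟩ : g = f₀ ∧ m1 = m2 ∧ k = k₀ := by simpa [Prod.ext_iff] using htz2
    exact ⟨n, by rw [hg, hk]⟩
  refine ⟨f₀, k₀, {n | Sum.inl (f₀, n, k₀) ∈ D}, ?_, ?_⟩
  · -- infinite
    rw [Set.infinite_coe_iff.symm]
    by_contra hfin
    rw [not_infinite_iff_finite] at hfin
    have hfin' : Set.Finite {n | (Sum.inl (f₀, n, k₀) : P2t i φ) ∈ D} := hfin
    obtain ⟨a, ha, hmax⟩ := Set.Finite.exists_maximalFor id _ hfin' ⟨n₀, hd₀⟩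
    apply hng
    refine ⟨Sum.inl (f₀, a, k₀), ha, fun x hx => ?_⟩
    obtain ⟨n, rfl⟩ := hshare x hx
    have hn : n ∈ {n | (Sum.inl (f₀, n, k₀) : P2t i φ) ∈ D} := hx
    have hna : n ≤ a := by
      by_contra hna
      have h := hmax hn (by simp only [id_eq]; omega)
      simp only [id_eq] at h
      omega
    rcases Nat.lt_or_ge n a with h | h
    · exact Or.inr (Or.inl ⟨f₀, n, a, k₀, rfl, rfl, h⟩)
    · have : n = a := by omega
      exact Or.inl (by rw [this])
  · ext x
    constructor
    · intro hx
      obtain ⟨n, rfl⟩ := hshare x hx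
      exact ⟨n, hx, rfl⟩
    · rintro ⟨n, hn, rfl⟩
      exact hn

lemma lub_inl_chain (hif : IFData i f) (hφ : Function.Injective φ)
    {f₀ : Xt i φ} {k₀ : ℕ} {N : Set ℕ} (hN : N.Infinite)
    (hDform : D = {x : P2t i φ | ∃ n ∈ N, x = Sum.inl (f₀, n, k₀)}) :
    IsLub' (P2le i φ f) D (P2top i φ) := by
  subst hDform
  constructor
  · exact fun x _ => P2le_top x
  · intro v hv
    rcases v with t | c | u
    · -- v in X × ℕ × ℕ
      exfalso
      obtain ⟨g, m, k⟩ := t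
      obtain ⟨n, hn, hgt⟩ := hN.exists_gt m
      have := hv (Sum.inl (f₀, n, k₀)) ⟨n, hn, rfl⟩
      obtain ⟨m', ht, hm'⟩ := P2le_inl this
      obtain ⟨-, hm, -⟩ : g = f₀ ∧ m = m' ∧ k = k₀ := by simpa [Prod.ext_iff] using ht
      omega
    · -- v in B
      exfalso
      obtain ⟨n₁, hn₁⟩ := hN.nonempty
      have h1 := hv (Sum.inl (f₀, n₁, k₀)) ⟨n₁, hn₁, rfl⟩
      rcases h1 with heq | hlt
      · simp at heq
      obtain ⟨m₁, hm₁, hc₁⟩ := P2lt_inl_ofB (c := c) hlt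
      obtain ⟨n₂, hn₂, hgt₂⟩ := hN.exists_gt m₁
      have h2 := hv (Sum.inl (f₀, n₂, k₀)) ⟨n₂, hn₂, rfl⟩
      rcases h2 with heq | hlt₂
      · simp at heq
      obtain ⟨m₂, hm₂, hc₂⟩ := P2lt_inl_ofB (c := c) hlt₂
      rw [hc₁] at hc₂
      have hf : f₀.1 m₁ = f₀.1 m₂ := by simpa [Prod.ext_iff] using hc₂
      have := X_inj hif hφ f₀ hf
      omega
    · cases u; exact Or.inl rfl
end Main

/-- The poset `P₂ = (X × ℕ × ℕ) ∪ B ∪ {⊤₂}` is a dcpo; moreover, every directed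
subset of `P₂` without a greatest element either is of the form `{(f₀, n, k₀) : n ∈ N}` for
fixed `f₀ ∈ X`, `k₀ ∈ ℕ` and an infinite `N ⊆ ℕ`, or is cofinally contained in `B`. -/
theorem P2_isDcpo_and_directed_form (i : Pairt → Set ℕ) (f : Pairt → NWord → ℕ)
    (φ : ℕ → Pairt) (hif : IFData i f) (hφ : Function.Bijective φ) :
    IsPartialOrder (P2t i φ) (P2le i φ f) ∧
    IsDcpoRel (P2le i φ f) ∧
    ∀ D : Set (P2t i φ), DirectedOn' (P2le i φ f) D →
      (¬ ∃ m ∈ D, ∀ x ∈ D, P2le i φ f x m) →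
      (∃ (f₀ : Xt i φ) (k₀ : ℕ) (N : Set ℕ), N.Infinite ∧
        D = {x : P2t i φ | ∃ n ∈ N, x = Sum.inl (f₀, n, k₀)}) ∨
      (∀ x ∈ D, ∃ y ∈ D, (∃ b : Bt, y = P2ofB i φ b) ∧ P2le i φ f x y) := by

  refine ⟨P2_partialOrder, ?_, ?_⟩
  · intro D hD
    by_cases hg : ∃ m ∈ D, ∀ x ∈ D, P2le i φ f x m
    · obtain ⟨m, hm, hub⟩ := hg
      exact ⟨m, hub, fun v hv => hv m hm⟩
    · by_cases hB : ∃ b : Bt, P2ofB i φ b ∈ D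
      · obtain ⟨b, hb⟩ := hB
        exact lub_B_case hif hD hg hb
      · push_neg at hB
        obtain ⟨f₀, k₀, N, hN, hform⟩ := classify_inl hD hg hB
        exact ⟨P2top i φ, lub_inl_chain hif hφ.1 hN hform⟩
  · intro D hD hng
    by_cases hB : ∃ b : Bt, P2ofB i φ b ∈ D
    · obtain ⟨b, hb⟩ := hB
      exact Or.inr (cofinal_in_B hD hng hb)
    · push_neg at hB
      exact Or.inl (classify_inl hD hng hB)
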